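/- For the Freud weight w(x;t) = exp(−x⁴ + t x²) with t ∈ ℝ, the nontrivial leading coefficient is expressed in terms of the recurrence coefficients: for every n ≥ 1, p(n,t) = (1/2)β_n(t) + t β_n(t)² − 2 β_n(t)(β_{n−1}(t) + β_n(t))(β_n(t) + β_{n+1}(t)). -/

import Mathlib

/-!
The Freud functional `L q = ∫ q(x) w(x;t) dx` is positive definite and even, and integration by
parts gives `L q' = L (q (4X³ - 2tX))`. Positivity and evenness yield the three-term recurrence
`X P_n = P_{n+1} + β_n P_{n-1}`, whose `x^{n-1}` coefficients give `p(n+1) = p(n) - β_n`.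
Integrating by parts against `P_{n+1} P_n` and expanding `X³ P_{n+1} P_n` with the recurrence gives
Freud's string equation `n = 4β_n(β_{n-1} + β_n + β_{n+1}) - 2tβ_n`. The closed form for `p(n)`
then follows by induction: the increments of both sides agree modulo the string equations at `n`
and `n + 1`.
-/

open MeasureTheory Real Polynomial Set Submodule

noncomputable def freudWeight (t x : ℝ) : ℝ := exp (-x ^ 4 + t * x ^ 2)

lemma integrable_eval_mul_exp_neg_sq (q : ℝ[X]) :
    Integrable fun x : ℝ => q.eval x * exp (-x ^ 2) := by
  simp_rw [eval_eq_sum_range, Finset.sum_mul]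
  refine integrable_finsetSum _ fun i _ => ?_
  have := (integrable_rpow_mul_exp_neg_mul_sq one_pos
    (s := i) (by linarith [i.cast_nonneg (α := ℝ)])).const_mul (q.coeff i)
  simpa [rpow_natCast, mul_assoc] using this

lemma integrable_eval_mul_freudWeight (t : ℝ) (q : ℝ[X]) :
    Integrable fun x => q.eval x * freudWeight t x := by
  have hbound (x : ℝ) : ‖exp (-x ^ 4 + (t + 1) * x ^ 2)‖ ≤ exp ((t + 1) ^ 2 / 4) := by
    rw [norm_of_nonneg (exp_nonneg _), exp_le_exp]
    nlinarith [sq_nonneg (x ^ 2 - (t + 1) / 2)]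
  refine ((integrable_eval_mul_exp_neg_sq q).mul_bdd (Continuous.aestronglyMeasurable (by fun_prop))
    (ae_of_all _ hbound)).congr (ae_of_all _ fun x => ?_)
  simp only [freudWeight, mul_assoc, ← exp_add]
  ring_nf

noncomputable def freudFunctional (t : ℝ) : ℝ[X] →ₗ[ℝ] ℝ where
  toFun q := ∫ x, q.eval x * freudWeight t x
  map_add' q r := by
    simp only [eval_add, add_mul]
    exact integral_add (integrable_eval_mul_freudWeight t q) (integrable_eval_mul_freudWeight t r)
  map_smul' c q := by
    simp only [eval_smul, smul_eq_mul, mul_assoc, integral_const_mul, RingHom.id_apply]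

lemma freudFunctional_apply (t : ℝ) (q : ℝ[X]) :
    freudFunctional t q = ∫ x, q.eval x * freudWeight t x := rfl

lemma freudFunctional_comp_neg_X (t : ℝ) (q : ℝ[X]) :
    freudFunctional t (q.comp (-X)) = freudFunctional t q := by
  rw [freudFunctional_apply, freudFunctional_apply,
    ← integral_neg_eq_self (fun x => q.eval x * freudWeight t x)]
  simp [freudWeight, Even.neg_pow (by decide : Even 4), Even.neg_pow even_two]

lemma freudFunctional_mul_self_pos (t : ℝ) {q : ℝ[X]} (hq : q ≠ 0) :
    0 < freudFunctional t (q * q) := by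
  have hnonneg : 0 ≤ fun x => (q * q).eval x * freudWeight t x := fun x => by
    simpa [freudWeight] using mul_nonneg (mul_self_nonneg (q.eval x)) (exp_nonneg _)
  rw [freudFunctional_apply, integral_pos_iff_support_of_nonneg hnonneg
    (integrable_eval_mul_freudWeight t _)]
  obtain ⟨x, hx⟩ := (finite_setOfPred_isRoot hq).infinite_compl.nonempty
  refine (Continuous.isOpen_support (by unfold freudWeight; fun_prop)).measure_pos volume ⟨x, ?_⟩
  simpa [freudWeight, exp_ne_zero] using hx

lemma freudFunctional_derivative (t : ℝ) (q : ℝ[X]) :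
    freudFunctional t (derivative q) = freudFunctional t (q * (C 4 * X ^ 3 - C (2 * t) * X)) := by
  have hderiv (x : ℝ) : HasDerivAt (fun x => q.eval x * freudWeight t x)
      ((derivative q - q * (C 4 * X ^ 3 - C (2 * t) * X)).eval x * freudWeight t x) x := by
    have hexp : HasDerivAt (fun x => -x ^ 4 + t * x ^ 2) (-(4 * x ^ 3) + t * (2 * x)) x := by
      simpa using (hasDerivAt_pow 4 x).fun_neg.fun_add ((hasDerivAt_pow 2 x).const_mul t)
    refine ((q.hasDerivAt x).mul hexp.exp).congr_deriv ?_
    simp only [freudWeight, eval_sub, eval_mul, eval_C, eval_pow, eval_X]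
    ring
  rw [← sub_eq_zero, ← map_sub]
  exact integral_eq_zero_of_hasDerivAt_of_integrable hderiv
    (integrable_eval_mul_freudWeight t _) (integrable_eval_mul_freudWeight t q)

section OrthogonalPolynomials

variable {K : Type*} [Field K]

structure IsMonicOrthogonal (L : K[X] →ₗ[K] K) (P : ℕ → K[X]) : Prop where
  monic : ∀ n, (P n).Monic
  natDegree_eq : ∀ n, (P n).natDegree = n
  orthogonal : ∀ j k, j ≠ k → L (P j * P k) = 0

noncomputable def recurrenceCoeff (L : K[X] →ₗ[K] K) (P : ℕ → K[X]) : ℕ → K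
  | 0 => 0
  | n + 1 => L (P (n + 1) * P (n + 1)) / L (P n * P n)

lemma LinearMap.map_eq_zero_of_comp_neg_X_eq_neg [CharZero K] {L : K[X] →ₗ[K] K}
    (heven : ∀ q, L (q.comp (-X)) = L q) {q : K[X]} (hq : q.comp (-X) = -q) : L q = 0 := by
  have := heven q
  rw [hq, map_neg, neg_eq_iff_add_eq_zero, ← two_mul, mul_eq_zero] at this
  exact this.resolve_left two_ne_zero

namespace IsMonicOrthogonal

variable {L : K[X] →ₗ[K] K} {P : ℕ → K[X]} (hP : IsMonicOrthogonal L P)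
include hP

lemma coeff_self (n : ℕ) : (P n).coeff n = 1 := by
  simpa [hP.natDegree_eq n] using (hP.monic n).coeff_natDegree

lemma degree_eq (n : ℕ) : (P n).degree = n := by
  rw [degree_eq_natDegree (hP.monic n).ne_zero, hP.natDegree_eq]

lemma span_image_Iio (n : ℕ) : span K (P '' Iio n) = degreeLT K n :=
  Sequence.span_degreeLT ⟨P, hP.degree_eq⟩ fun i _ => by simp [(hP.monic i).leadingCoeff]

lemma map_mul_eq_zero_of_forall_lt {s : K[X]} {n : ℕ} (hs : ∀ k < n, L (P k * s) = 0)
    {r : K[X]} (hr : r.degree < n) : L (r * s) = 0 := by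
  have hspan : span K (P '' Iio n) ≤ LinearMap.ker (L ∘ₗ LinearMap.mulRight K s) :=
    span_le.2 <| by rintro _ ⟨k, hk, rfl⟩; exact hs k hk
  exact hspan (by rw [hP.span_image_Iio]; exact mem_degreeLT.2 hr)

lemma map_mul_eq_zero_of_degree_lt {r : K[X]} {n : ℕ} (hr : r.degree < n) : L (r * P n) = 0 :=
  hP.map_mul_eq_zero_of_forall_lt (fun k hk => hP.orthogonal k n hk.ne) hr

lemma degree_sub_C_coeff_mul_lt {q : K[X]} {n : ℕ} (hq : q.natDegree ≤ n) :
    (q - C (q.coeff n) * P n).degree < n := by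
  refine (degree_lt_iff_coeff_zero _ _).2 fun m hm => ?_
  rcases hm.eq_or_lt with rfl | hlt
  · simp [hP.coeff_self]
  · simp [coeff_eq_zero_of_natDegree_lt (hq.trans_lt hlt),
      coeff_eq_zero_of_natDegree_lt (hP.natDegree_eq n ▸ hlt)]

lemma map_mul_eq_coeff_mul {q : K[X]} {n : ℕ} (hq : q.natDegree ≤ n) :
    L (P n * q) = q.coeff n * L (P n * P n) := by
  have h := hP.map_mul_eq_zero_of_degree_lt (hP.degree_sub_C_coeff_mul_lt hq)
  rwa [sub_mul, map_sub, mul_assoc, C_mul', map_smul, smul_eq_mul, sub_eq_zero, mul_comm q] at h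

variable (hL : ∀ q ≠ 0, L (q * q) ≠ 0)
include hL

lemma eq_of_monic {Q : K[X]} {n : ℕ} (hQ : Q.Monic) (hdeg : Q.natDegree = n)
    (horth : ∀ k < n, L (P k * Q) = 0) : Q = P n := by
  have hs (k : ℕ) (hk : k < n) : L (P k * (Q - P n)) = 0 := by
    rw [mul_sub, map_sub, horth k hk, hP.orthogonal k n hk.ne, sub_zero]
  have hlt : (Q - P n).degree < n := by
    simpa [← hdeg, hQ.coeff_natDegree] using hP.degree_sub_C_coeff_mul_lt hdeg.le
  by_contra hne
  exact hL _ (sub_ne_zero.2 hne) (hP.map_mul_eq_zero_of_forall_lt hs hlt)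

lemma recurrenceCoeff_succ_mul (n : ℕ) :
    recurrenceCoeff L P (n + 1) * L (P n * P n) = L (P (n + 1) * P (n + 1)) :=
  div_mul_cancel₀ _ (hL _ (hP.monic n).ne_zero)

lemma recurrenceCoeff_sq_mul (n : ℕ) :
    recurrenceCoeff L P n ^ 2 * L (P (n - 1) * P (n - 1))
      = recurrenceCoeff L P n * L (P n * P n) := by
  rcases n with _ | n
  · simp [recurrenceCoeff]
  · rw [pow_two, mul_assoc, Nat.add_sub_cancel, hP.recurrenceCoeff_succ_mul hL]

variable (heven : ∀ q, L (q.comp (-X)) = L q)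
include heven

lemma neg_one_pow_mul_comp_neg_X (n : ℕ) : (-1) ^ n * (P n).comp (-X) = P n := by
  refine hP.eq_of_monic hL ?_ ?_ fun k hk => ?_
  · simpa [hP.natDegree_eq] using (hP.monic n).neg_one_pow_natDegree_mul_comp_neg_X
  · rcases neg_one_pow_eq_or K[X] n with h1 | h1 <;> simp [h1, natDegree_comp, hP.natDegree_eq]
  · have h : L (P k * (P n).comp (-X)) = 0 := by
      rw [← heven, mul_comp_neg_X, comp_neg_X_comp_neg_X]
      exact hP.map_mul_eq_zero_of_degree_lt (by simpa [hP.degree_eq])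
    rcases neg_one_pow_eq_or K[X] n with h1 | h1 <;> simp [h1, h]

lemma map_X_mul_mul_self [CharZero K] (n : ℕ) : L (X * (P n * P n)) = 0 := by
  refine LinearMap.map_eq_zero_of_comp_neg_X_eq_neg heven ?_
  conv_rhs => rw [← hP.neg_one_pow_mul_comp_neg_X hL heven n]
  rcases neg_one_pow_eq_or K[X] n with h1 | h1 <;> simp [h1]

/-- At `n = 0` the truncated `n - 1` is harmless because `recurrenceCoeff L P 0 = 0`. -/
lemma X_mul [CharZero K] (n : ℕ) :
    X * P n = P (n + 1) + C (recurrenceCoeff L P n) * P (n - 1) := by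
  have hlt : (C (recurrenceCoeff L P n) * P (n - 1)).natDegree < (X * P n).natDegree := by
    rw [monic_X.natDegree_mul (hP.monic n), natDegree_X, hP.natDegree_eq]
    exact (natDegree_C_mul_le _ _).trans_lt (by rw [hP.natDegree_eq]; omega)
  rw [← sub_eq_iff_eq_add]
  refine hP.eq_of_monic hL ?_ ?_ fun k hk => ?_
  · exact (monic_X.mul (hP.monic n)).sub_of_left (degree_lt_degree hlt)
  · rw [natDegree_sub_eq_left_of_natDegree_lt hlt, monic_X.natDegree_mul (hP.monic n),
      hP.natDegree_eq, natDegree_X, add_comm]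
  rw [mul_sub, map_sub, mul_left_comm, C_mul', mul_smul_comm, map_smul, smul_eq_mul]
  rcases (Nat.lt_succ_iff.1 hk).eq_or_lt with rfl | hkn
  · rw [hP.map_X_mul_mul_self hL heven]
    rcases k with _ | k
    · simp [recurrenceCoeff]
    · simp [hP.orthogonal (k + 1) k (by omega)]
  obtain ⟨m, rfl⟩ : ∃ m, n = m + 1 := ⟨n - 1, by omega⟩
  rw [show X * (P k * P (m + 1)) = P (m + 1) * (X * P k) by ring, Nat.add_sub_cancel,
    hP.map_mul_eq_coeff_mul (by rw [natDegree_X_mul (hP.monic k).ne_zero, hP.natDegree_eq]; omega),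
    coeff_X_mul]
  rcases (Nat.lt_succ_iff.1 hkn).eq_or_lt with rfl | hkm
  · rw [hP.coeff_self, one_mul, hP.recurrenceCoeff_succ_mul hL, sub_self]
  · rw [coeff_eq_zero_of_natDegree_lt (by rwa [hP.natDegree_eq]), hP.orthogonal k m hkm.ne]
    ring

lemma coeff_add_two [CharZero K] (n : ℕ) :
    (P (n + 2)).coeff n = (X * P (n + 1)).coeff n - recurrenceCoeff L P (n + 1) := by
  rw [hP.X_mul hL heven (n + 1), coeff_add, coeff_C_mul, Nat.add_sub_cancel, hP.coeff_self]
  ring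

lemma map_X_mul_mul_X_mul [CharZero K] (n : ℕ) :
    L (X * P n * (X * P n)) = L (P (n + 1) * P (n + 1))
      + recurrenceCoeff L P n ^ 2 * L (P (n - 1) * P (n - 1)) := by
  have hexpand : X * P n * (X * P n) = P (n + 1) * P (n + 1)
      + (2 * recurrenceCoeff L P n) • (P (n + 1) * P (n - 1))
      + recurrenceCoeff L P n ^ 2 • (P (n - 1) * P (n - 1)) := by
    rw [hP.X_mul hL heven n]
    simp only [smul_eq_C_mul, map_mul, map_pow, map_ofNat]
    ring
  rw [hexpand, map_add, map_add, map_smul, map_smul, hP.orthogonal (n + 1) (n - 1) (by omega),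
    smul_eq_mul, smul_eq_mul, mul_zero, add_zero]

lemma string_equation [CharZero K] {t : K}
    (hD : ∀ q, L (derivative q) = L (q * (C 4 * X ^ 3 - C (2 * t) * X))) (n : ℕ) :
    (n + 1 : K) = 4 * recurrenceCoeff L P (n + 1) * (recurrenceCoeff L P n
      + recurrenceCoeff L P (n + 1) + recurrenceCoeff L P (n + 2))
      - 2 * t * recurrenceCoeff L P (n + 1) := by
  have hder : L (derivative (P (n + 1) * P n)) = (n + 1) * L (P n * P n) := by
    have hdeg : (derivative (P (n + 1))).natDegree ≤ n :=
      (natDegree_derivative_le _).trans (by rw [hP.natDegree_eq]; omega)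
    have hlt : (derivative (P n)).degree < ↑(n + 1) :=
      (degree_derivative_lt (hP.monic n).ne_zero).trans (by rw [hP.degree_eq]; norm_cast; omega)
    rw [derivative_mul, map_add, mul_comm (derivative _), hP.map_mul_eq_coeff_mul hdeg,
      coeff_derivative, hP.coeff_self, mul_comm (P (n + 1)), hP.map_mul_eq_zero_of_degree_lt hlt]
    ring
  have hXP (m : ℕ) : (X * P m).natDegree = m + 1 := by
    rw [natDegree_X_mul (hP.monic m).ne_zero, hP.natDegree_eq]
  have hX : L (P (n + 1) * P n * X) = L (P (n + 1) * P (n + 1)) := by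
    rw [mul_assoc, mul_comm (P n), hP.map_mul_eq_coeff_mul (hXP n).le, coeff_X_mul, hP.coeff_self,
      one_mul]
  have hX3 : L (P (n + 1) * P n * X ^ 3) = L (P (n + 2) * P (n + 2))
      + recurrenceCoeff L P (n + 1) * L (X * P n * (X * P n)) := by
    have hdeg : (X * (X * P n)).natDegree ≤ n + 2 := by
      rw [natDegree_X_mul (monic_X.mul (hP.monic n)).ne_zero, hXP]
    rw [show P (n + 1) * P n * X ^ 3 = X * P (n + 1) * (X * (X * P n)) by ring,
      hP.X_mul hL heven (n + 1), add_mul, map_add, C_mul', smul_mul_assoc, map_smul, smul_eq_mul,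
      hP.map_mul_eq_coeff_mul hdeg, coeff_X_mul, coeff_X_mul, hP.coeff_self, one_mul,
      Nat.add_sub_cancel, show P n * (X * (X * P n)) = X * P n * (X * P n) by ring]
  have hIBP := hD (P (n + 1) * P n)
  rw [mul_sub, mul_left_comm, mul_left_comm _ (C _), C_mul', C_mul', map_sub, map_smul, map_smul,
    smul_eq_mul, smul_eq_mul, hder, hX, hX3, hP.map_X_mul_mul_X_mul hL heven] at hIBP
  have r1 := hP.recurrenceCoeff_succ_mul hL n
  have r2 : recurrenceCoeff L P (n + 2) * L (P (n + 1) * P (n + 1)) = L (P (n + 2) * P (n + 2)) :=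
    hP.recurrenceCoeff_succ_mul hL (n + 1)
  have r3 := hP.recurrenceCoeff_sq_mul hL n
  apply mul_right_cancel₀ (hL _ (hP.monic n).ne_zero)
  linear_combination hIBP + 4 * recurrenceCoeff L P (n + 1) * r3
    - (4 * recurrenceCoeff L P (n + 1) + 4 * recurrenceCoeff L P (n + 2) - 2 * t) * r1 - 4 * r2

end IsMonicOrthogonal

lemma eq_closed_form_of_string_equation [CharZero K] {t : K} {β p : ℕ → K}
    (hβ0 : β 0 = 0) (hp1 : p 1 = 0) (hp : ∀ n, p (n + 2) = p (n + 1) - β (n + 1))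
    (hstring : ∀ n : ℕ,
      (n + 1 : K) = 4 * β (n + 1) * (β n + β (n + 1) + β (n + 2)) - 2 * t * β (n + 1))
    (n : ℕ) :
    p (n + 1) = 1 / 2 * β (n + 1) + t * β (n + 1) ^ 2
      - 2 * β (n + 1) * (β n + β (n + 1)) * (β (n + 1) + β (n + 2)) := by
  induction n with
  | zero => linear_combination hp1 - β 1 / 2 * hstring 0 + 2 * β 1 * β 2 * hβ0
  | succ n ih =>
    have := hstring (n + 1)
    push_cast at this
    linear_combination ih + hp n + (β (n + 1) + β (n + 2)) / 2 * (hstring n - this)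

end OrthogonalPolynomials

theorem stmt15_general (t : ℝ) (P : ℕ → Polynomial ℝ)
    (hmonic : ∀ n, (P n).Monic) (hdeg : ∀ n, (P n).natDegree = n)
    (horth : ∀ j k, j ≠ k →
      ∫ x : ℝ, (P j).eval x * (P k).eval x * Real.exp (-x ^ 4 + t * x ^ 2) = 0)
    (h : ℕ → ℝ) (hh : ∀ n, h n = ∫ x : ℝ, ((P n).eval x) ^ 2 * Real.exp (-x ^ 4 + t * x ^ 2))
    (β : ℕ → ℝ) (hβ0 : β 0 = 0) (hβ : ∀ n, β (n + 1) = h (n + 1) / h n)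
    (p : ℕ → ℝ) (hp1 : p 1 = 0)
    (hp : ∀ n, 2 ≤ n → p n = (P n).coeff (n - 2))
    (n : ℕ) (hn : 1 ≤ n) :
    p n = (1 / 2) * β n + t * (β n) ^ 2
      - 2 * β n * (β (n - 1) + β n) * (β n + β (n + 1)) := by
  have hP : IsMonicOrthogonal (freudFunctional t) P :=
    ⟨hmonic, hdeg, fun j k hjk => by
      simpa [freudFunctional_apply, freudWeight, mul_assoc] using horth j k hjk⟩
  have hL (q : ℝ[X]) (hq : q ≠ 0) : freudFunctional t (q * q) ≠ 0 :=
    (freudFunctional_mul_self_pos t hq).ne'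
  have heven := freudFunctional_comp_neg_X t
  obtain rfl : β = recurrenceCoeff (freudFunctional t) P := by
    funext m
    rcases m with _ | m
    · exact hβ0
    · simp [hβ, hh, recurrenceCoeff, freudFunctional_apply, freudWeight, pow_two, mul_assoc]
  obtain ⟨n, rfl⟩ := Nat.exists_eq_add_of_le' hn
  have hstep (m : ℕ) : p (m + 2) = p (m + 1) - recurrenceCoeff (freudFunctional t) P (m + 1) := by
    rw [hp (m + 2) (by omega), Nat.add_sub_cancel, hP.coeff_add_two hL heven]
    rcases m with _ | m
    · simp [hp1]
    · rw [coeff_X_mul, hp (m + 2) (by omega), Nat.add_sub_cancel]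
  simpa using eq_closed_form_of_string_equation hβ0 hp1 hstep
    (hP.string_equation hL heven (freudFunctional_derivative t)) n

theorem stmt15 (t : ℝ) (P : ℕ → Polynomial ℝ)
    (hmonic : ∀ n, (P n).Monic) (hdeg : ∀ n, (P n).natDegree = n)
    (horth : ∀ j k, j ≠ k →
      ∫ x : ℝ, (P j).eval x * (P k).eval x * Real.exp (-x ^ 4 + t * x ^ 2) = 0)
    (h : ℕ → ℝ) (hh : ∀ n, h n = ∫ x : ℝ, ((P n).eval x) ^ 2 * Real.exp (-x ^ 4 + t * x ^ 2))
    (β : ℕ → ℝ) (hβ0 : β 0 = 0) (hβ : ∀ n, β (n + 1) = h (n + 1) / h n)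
    (p : ℕ → ℝ) (hp0 : p 0 = 0) (hp1 : p 1 = 0)
    (hp : ∀ n, 2 ≤ n → p n = (P n).coeff (n - 2))
    (n : ℕ) (hn : 1 ≤ n) :
    p n = (1 / 2) * β n + t * (β n) ^ 2
      - 2 * β n * (β (n - 1) + β n) * (β n + β (n + 1)) :=
  stmt15_general t P hmonic hdeg horth h hh β hβ0 hβ p hp1 hp n hn
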